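/- If f: R^n × R → R is L♮-convex in (x,y) (jointly, in R^{n+1}), then the marginal function g(x) = inf over y in a fixed interval [a,∞) of f(x,y) is L♮-convex in x, provided the infimum is attained and finite for every x. -/
import Mathlib


/-- minimization of a jointly L♮-convex function over its last
coordinate (over y ≥ a, with attained minimizer) yields an L♮-convex function. -/
theorem stmt_3 (n : ℕ) (f : (Fin n → ℝ) × ℝ → ℝ) (a : ℝ)
    (hL : ∀ (x1 x2 : Fin n → ℝ) (y1 y2 ξ1 ξ2 : ℝ),
      f ((x1 ⊔ x2) - (fun _ => max ξ1 ξ2), max y1 y2 - max ξ1 ξ2)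
        + f ((x1 ⊓ x2) - (fun _ => min ξ1 ξ2), min y1 y2 - min ξ1 ξ2)
        ≤ f (x1 - (fun _ => ξ1), y1 - ξ1) + f (x2 - (fun _ => ξ2), y2 - ξ2))
    (ysel : (Fin n → ℝ) → ℝ)
    (hge : ∀ x, a ≤ ysel x)
    (hmin : ∀ x, ∀ t : ℝ, a ≤ t → f (x, ysel x) ≤ f (x, t)) :
    ∀ (x1 x2 : Fin n → ℝ) (ξ1 ξ2 : ℝ),
      f ((x1 ⊔ x2) - (fun _ => max ξ1 ξ2), ysel ((x1 ⊔ x2) - fun _ => max ξ1 ξ2))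
        + f ((x1 ⊓ x2) - (fun _ => min ξ1 ξ2), ysel ((x1 ⊓ x2) - fun _ => min ξ1 ξ2))
        ≤ f (x1 - (fun _ => ξ1), ysel (x1 - fun _ => ξ1))
          + f (x2 - (fun _ => ξ2), ysel (x2 - fun _ => ξ2)) := by
  intro x1 x2 ξ1 ξ2
  set s1 := ysel (x1 - fun _ => ξ1) with hs1
  set s2 := ysel (x2 - fun _ => ξ2) with hs2
  have h1 : a ≤ s1 := hge _
  have h2 : a ≤ s2 := hge _
  have key := hL x1 x2 (s1 + ξ1) (s2 + ξ2) ξ1 ξ2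
  simp only [add_sub_cancel_right] at key
  have hmax : a ≤ max (s1 + ξ1) (s2 + ξ2) - max ξ1 ξ2 := by
    rcases le_total ξ1 ξ2 with h | h
    · have : s2 + ξ2 - max ξ1 ξ2 = s2 := by rw [max_eq_right h]; ring
      calc a ≤ s2 := h2
        _ = s2 + ξ2 - max ξ1 ξ2 := this.symm
        _ ≤ max (s1 + ξ1) (s2 + ξ2) - max ξ1 ξ2 := by gcongr; exact le_max_right _ _
    · have : s1 + ξ1 - max ξ1 ξ2 = s1 := by rw [max_eq_left h]; ring
      calc a ≤ s1 := h1
        _ = s1 + ξ1 - max ξ1 ξ2 := this.symm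
        _ ≤ max (s1 + ξ1) (s2 + ξ2) - max ξ1 ξ2 := by gcongr; exact le_max_left _ _
  have hmin' : a ≤ min (s1 + ξ1) (s2 + ξ2) - min ξ1 ξ2 := by
    have e1 : a + min ξ1 ξ2 ≤ s1 + ξ1 := add_le_add h1 (min_le_left _ _)
    have e2 : a + min ξ1 ξ2 ≤ s2 + ξ2 := add_le_add h2 (min_le_right _ _)
    have := le_min e1 e2
    linarith
  have t1 := hmin ((x1 ⊔ x2) - fun _ => max ξ1 ξ2) _ hmax
  have t2 := hmin ((x1 ⊓ x2) - fun _ => min ξ1 ξ2) _ hmin'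
  linarith
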